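/- arXiv:0704.1057 — 6 statements merged into one kernel-verified Lean document; each statement's English description precedes it below -/
import Mathlib

section
/- If every natural number of the form 3k + 4 (k ≥ 0) eventually reaches 1 under iteration of T, then every natural number n ≥ 1 eventually reaches 1 under iteration of T. -/
/-! Even numbers descend under `T`, so by strong induction only odd `n ≥ 3` need the hypothesis.
For those, `3n + 1 = 3(n - 1) + 4` is even and different from `1`, and `T (3n + 1) = (3n + 1)/2 = T n`:
the trajectory of `3n + 1` reaches `1` through `T n`, hence so does that of `n`. -/

/-- The Collatz map `T`. -/
def T (n : ℕ) : ℕ := if n % 2 = 1 then (3 * n + 1) / 2 else n / 2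

lemma T_of_even {n : ℕ} (hn : n % 2 = 0) : T n = n / 2 := by
  simp [T, hn]

lemma T_of_odd {n : ℕ} (hn : n % 2 = 1) : T n = (3 * n + 1) / 2 := by
  simp [T, hn]

lemma T_three_mul_add_one {n : ℕ} (hn : n % 2 = 1) : T (3 * n + 1) = T n := by
  rw [T_of_odd hn, T_of_even (by omega)]

lemma exists_iterate_eq_of_iterate_apply {α : Type*} {f : α → α} {a b : α}
    (h : ∃ j, f^[j] (f a) = b) : ∃ j, f^[j] a = b :=
  let ⟨j, hj⟩ := h
  ⟨j + 1, by rwa [Function.iterate_succ_apply]⟩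

lemma exists_iterate_apply_eq_of_ne {α : Type*} {f : α → α} {a b : α}
    (h : ∃ j, f^[j] a = b) (hab : a ≠ b) : ∃ j, f^[j] (f a) = b := by
  obtain ⟨_ | j, hj⟩ := h
  · exact absurd hj hab
  · exact ⟨j, by rwa [Function.iterate_succ_apply] at hj⟩

theorem stmt_5 (h : ∀ k : ℕ, ∃ j : ℕ, T^[j] (3 * k + 4) = 1) :
    ∀ n : ℕ, 1 ≤ n → ∃ j : ℕ, T^[j] n = 1 := by
  intro n
  induction n using Nat.strong_induction_on with
  | _ n ih =>
    intro hn
    rcases eq_or_lt_of_le hn with rfl | hn1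
    · exact ⟨0, rfl⟩
    apply exists_iterate_eq_of_iterate_apply
    rcases Nat.mod_two_eq_zero_or_one n with heven | hodd
    · rw [T_of_even heven]
      exact ih (n / 2) (by omega) (by omega)
    · rw [← T_three_mul_add_one hodd]
      have hreach := h (n - 1)
      rw [show 3 * (n - 1) + 4 = 3 * n + 1 by omega] at hreach
      exact exists_iterate_apply_eq_of_ne hreach (by omega)
end

section
/- T maps Λ_{m+1} into Λ_m for every m ∈ ℕ: if n ∈ ℕ can be written as n = 2^{m+1}/3^l − Σ_{k=1}^{l} 2^{b_k}/3^k with 0 ≤ l ≤ m−2 and 0 ≤ b₁ < b₂ < ⋯ < b_l ≤ m−3 (for m+1 ≥ 4; Λ_j = {2^j} for j ≤ 3), then T(n) admits such a representation with m in place of m+1. -/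
/-- Membership in `Λ_m`: `n = 2^m/3^l − Σ_{k=1}^l 2^{b_k}/3^k` with
`0 ≤ l ≤ m−3` and `0 ≤ b₁ < ⋯ < b_l ≤ m−4` (truncated subtraction handles `m ≤ 3`,
forcing `l = 0` and `n = 2^m` there). -/
def InLambda (m n : ℕ) : Prop :=
  ∃ (l : ℕ) (b : Fin l → ℕ), l ≤ m - 3 ∧ StrictMono b ∧ (∀ i, b i ≤ m - 4) ∧
    (n : ℚ) = 2 ^ m / 3 ^ l - ∑ i : Fin l, (2 ^ (b i) : ℚ) / 3 ^ (i.val + 1)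

/-!
If `b₁ > 0` then `n = 2 q`, where `q ∈ Λ_m` has every exponent lowered by one; if `b₁ = 0` then
`3 n + 1 = 2 q`, where `q ∈ Λ_m` drops the first term and lowers the others. Since `3^l q` is an
integer and `3^l` is odd, either relation already forces the parity of `n`, so `T n = q`.
-/

def lambdaVal (m l : ℕ) (b : Fin l → ℕ) : ℚ :=
  2 ^ m / 3 ^ l - ∑ i : Fin l, (2 ^ (b i) : ℚ) / 3 ^ (i.val + 1)

theorem inLambda_iff {m n : ℕ} :
    InLambda m n ↔ ∃ (l : ℕ) (b : Fin l → ℕ), l ≤ m - 3 ∧ StrictMono b ∧ (∀ i, b i ≤ m - 4) ∧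
      (n : ℚ) = lambdaVal m l b :=
  Iff.rfl

theorem exists_lambdaVal_mul_pow_eq_intCast (m l : ℕ) (b : Fin l → ℕ) :
    ∃ z : ℤ, lambdaVal m l b * 3 ^ l = z := by
  refine ⟨2 ^ m - ∑ i : Fin l, 2 ^ (b i) * 3 ^ (l - 1 - i.val), ?_⟩
  push_cast
  rw [lambdaVal, sub_mul, div_mul_cancel₀ _ (by positivity), Finset.sum_mul]
  congr 1
  refine Finset.sum_congr rfl fun i _ => ?_
  have hl : (3 : ℚ) ^ l = 3 ^ (i.val + 1) * 3 ^ (l - 1 - i.val) := by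
    rw [← pow_add]; congr 1; omega
  rw [hl, ← mul_assoc, div_mul_cancel₀ _ (by positivity)]

theorem lambdaVal_succ_of_pos {m l : ℕ} {b : Fin l → ℕ} (hb : ∀ i, 1 ≤ b i) :
    lambdaVal (m + 1) l b = 2 * lambdaVal m l (fun i => b i - 1) := by
  rw [lambdaVal, lambdaVal, mul_sub, Finset.mul_sum]
  congr 1
  · rw [pow_succ]; ring
  · refine Finset.sum_congr rfl fun i _ => ?_
    rw [← mul_div_assoc, ← pow_succ', Nat.sub_add_cancel (hb i)]

theorem three_mul_lambdaVal_succ_add_one {m l : ℕ} {b : Fin (l + 1) → ℕ} (h0 : b 0 = 0)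
    (hb : ∀ j : Fin l, 1 ≤ b j.succ) :
    3 * lambdaVal (m + 1) (l + 1) b + 1 = 2 * lambdaVal m l (fun j => b j.succ - 1) := by
  have hsum : 3 * ∑ j : Fin l, (2 ^ (b j.succ) : ℚ) / 3 ^ (j.val + 1 + 1)
      = 2 * ∑ j : Fin l, (2 ^ (b j.succ - 1) : ℚ) / 3 ^ (j.val + 1) := by
    rw [Finset.mul_sum, Finset.mul_sum]
    refine Finset.sum_congr rfl fun j _ => ?_
    rw [← Nat.sub_add_cancel (hb j), pow_succ (3 : ℚ) (j.val + 1)]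
    simp only [Nat.add_sub_cancel]
    field_simp
    ring
  have hlead : 3 * ((2 : ℚ) ^ (m + 1) / 3 ^ (l + 1)) = 2 * (2 ^ m / 3 ^ l) := by
    rw [pow_succ (2 : ℚ) m, pow_succ (3 : ℚ) l]
    field_simp
  rw [lambdaVal, lambdaVal, Fin.sum_univ_succ, h0]
  simp only [Fin.val_zero, Fin.val_succ]
  linear_combination hlead - hsum

theorem dvd_and_cast_div_two_of_eq_two_mul {k d : ℕ} {q : ℚ} (hd : Odd d)
    (hq : ∃ z : ℤ, q * d = z) (hk : (k : ℚ) = 2 * q) :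
    2 ∣ k ∧ ((k / 2 : ℕ) : ℚ) = q := by
  obtain ⟨z, hz⟩ := hq
  have hkd : ((k * d : ℕ) : ℤ) = 2 * z := by
    exact_mod_cast (show ((k * d : ℕ) : ℚ) = 2 * z by push_cast; rw [hk, mul_assoc, hz])
  have h2 : 2 ∣ k * d := Int.natCast_dvd_natCast.mp ⟨z, hkd⟩
  have hk2 : 2 ∣ k := (Nat.Coprime.dvd_mul_right (Nat.coprime_two_left.mpr hd)).mp h2
  refine ⟨hk2, ?_⟩
  rw [Nat.cast_div hk2 (by norm_num), hk]
  ring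

theorem T_cast_of_eq_two_mul {n l : ℕ} {q : ℚ} (hq : ∃ z : ℤ, q * 3 ^ l = z)
    (hn : (n : ℚ) = 2 * q) : (T n : ℚ) = q := by
  obtain ⟨h2, hhalf⟩ := dvd_and_cast_div_two_of_eq_two_mul (Odd.pow (by decide : Odd 3))
    (by exact_mod_cast hq) hn
  rwa [T, if_neg (by omega)]

theorem T_cast_of_three_mul_add_one_eq_two_mul {n l : ℕ} {q : ℚ}
    (hq : ∃ z : ℤ, q * 3 ^ l = z) (hn : ((3 * n + 1 : ℕ) : ℚ) = 2 * q) : (T n : ℚ) = q := by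
  obtain ⟨h2, hhalf⟩ := dvd_and_cast_div_two_of_eq_two_mul (Odd.pow (by decide : Odd 3))
    (by exact_mod_cast hq) hn
  rwa [T, if_pos (by omega)]

theorem Fin.val_add_le_of_strictMono {l : ℕ} {b : Fin (l + 1) → ℕ} (hb : StrictMono b)
    (i : Fin (l + 1)) : i.val + b 0 ≤ b i := by
  induction i using Fin.induction with
  | zero => simp
  | succ i ih =>
    have := hb (Fin.castSucc_lt_succ (i := i))
    simp only [Fin.val_succ, Fin.val_castSucc] at ih ⊢
    omega

theorem StrictMono.sub_one {ι : Type*} [Preorder ι] {b : ι → ℕ} (hb : StrictMono b)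
    (hpos : ∀ i, 1 ≤ b i) : StrictMono fun i => b i - 1 := fun i j hij => by
  show b i - 1 < b j - 1
  have := hb hij
  have := hpos i
  omega

theorem inLambda_T_of_forall_pos {m n l : ℕ} {b : Fin l → ℕ} (hmono : StrictMono b)
    (hbm : ∀ i, b i ≤ m + 1 - 4) (hpos : ∀ i, 1 ≤ b i) (hn : (n : ℚ) = lambdaVal (m + 1) l b) :
    InLambda m (T n) := by
  refine inLambda_iff.mpr ⟨l, fun i => b i - 1, ?_, hmono.sub_one hpos,
    fun i => Nat.sub_le_sub_right (hbm i) 1, ?_⟩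
  · cases l with
    | zero => omega
    | succ l =>
      have := Fin.val_add_le_of_strictMono hmono (Fin.last l)
      have := hpos 0
      have := hbm (Fin.last l)
      simp only [Fin.val_last] at *
      omega
  · exact T_cast_of_eq_two_mul (exists_lambdaVal_mul_pow_eq_intCast m l _)
      (hn.trans (lambdaVal_succ_of_pos hpos))

theorem inLambda_T_of_apply_zero_eq_zero {m n l : ℕ} {b : Fin (l + 1) → ℕ}
    (hl : l + 1 ≤ m + 1 - 3) (hmono : StrictMono b) (hbm : ∀ i, b i ≤ m + 1 - 4) (h0 : b 0 = 0)
    (hn : (n : ℚ) = lambdaVal (m + 1) (l + 1) b) : InLambda m (T n) := by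
  have hpos : ∀ j : Fin l, 1 ≤ b j.succ := fun j => by
    have := hmono (Fin.succ_pos j)
    omega
  refine inLambda_iff.mpr ⟨l, fun j => b j.succ - 1, by omega,
    (hmono.comp Fin.strictMono_succ).sub_one hpos,
    fun j => Nat.sub_le_sub_right (hbm j.succ) 1, ?_⟩
  refine T_cast_of_three_mul_add_one_eq_two_mul (exists_lambdaVal_mul_pow_eq_intCast m l _) ?_
  rw [← three_mul_lambdaVal_succ_add_one h0 hpos, ← hn]
  push_cast
  ring

theorem stmt_12 (m n : ℕ) (h : InLambda (m + 1) n) : InLambda m (T n) := by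
  obtain ⟨l, b, hl, hmono, hbm, hn⟩ := inLambda_iff.mp h
  cases l with
  | zero => exact inLambda_T_of_forall_pos hmono hbm finZeroElim hn
  | succ l =>
    by_cases h0 : b 0 = 0
    · exact inLambda_T_of_apply_zero_eq_zero hl hmono hbm h0 hn
    · exact inLambda_T_of_forall_pos hmono hbm
        (fun i => le_trans (Nat.one_le_iff_ne_zero.mpr h0) (hmono.monotone (Fin.zero_le i))) hn
end

section
/- For all m ∈ ℕ, Λ_m ⊆ S_m: every n ∈ Λ_m satisfies σ∞(n) = m. -/
/-- The total stopping time `σ∞(n)`: the least `k` with `T^[k] n = 1`. -/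
noncomputable def sigmaInf (n : ℕ) : ℕ := sInf {k | T^[k] n = 1}

/-!
Clearing denominators, `n ∈ Λ_m` reads `3^l n + Σ_i 2^{b_i} 3^{l-1-i} = 2^m`. Reducing this
modulo 2 shows that `n` is odd exactly when `b_0 = 0`. If so, `T` drops the term `b_0` and
lowers the other exponents by one; otherwise `T` lowers every exponent by one. Either way
`T(Λ_{m+1}) ⊆ Λ_m`, so `T^[m]` maps `Λ_m` into `Λ_0 = {1}`. The stopping time is not smaller:
otherwise `1 ∈ Λ_j` for some `j ≥ 1`, and then `T^[j-2] 1 ∈ Λ_2 = {4}` (or `1 ∈ Λ_1 = {2}`),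
while the orbit of `1` is `1, 2, 1, 2, …`.
-/

def lambdaSum {l : ℕ} (b : Fin l → ℕ) : ℕ := ∑ i, 2 ^ b i * 3 ^ (i.rev : ℕ)

def InLambdaNat (m n : ℕ) : Prop :=
  ∃ (l : ℕ) (b : Fin l → ℕ), l ≤ m - 3 ∧ StrictMono b ∧ (∀ i, b i ≤ m - 4) ∧
    3 ^ l * n + lambdaSum b = 2 ^ m

lemma inLambdaNat_of_inLambda {m n : ℕ} (h : InLambda m n) : InLambdaNat m n := by
  obtain ⟨l, b, hl, hb, hbm, heq⟩ := h
  refine ⟨l, b, hl, hb, hbm, ?_⟩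
  have hterm (i : Fin l) : ((2 ^ b i * 3 ^ (i.rev : ℕ) : ℕ) : ℚ)
      = 3 ^ l * ((2 : ℚ) ^ b i / 3 ^ (i.val + 1)) := by
    have hl : (3 : ℚ) ^ l = 3 ^ (i.rev : ℕ) * 3 ^ (i.val + 1) := by
      rw [← pow_add, Fin.val_rev]
      congr 1
      omega
    rw [hl]
    push_cast
    field_simp
  have : ((3 ^ l * n + lambdaSum b : ℕ) : ℚ) = 2 ^ m := by
    rw [Nat.cast_add, lambdaSum, Nat.cast_sum, Finset.sum_congr rfl fun i _ => hterm i,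
      ← Finset.mul_sum, Nat.cast_mul, heq]
    push_cast
    rw [mul_sub, mul_div_cancel₀ _ (by positivity), sub_add_cancel]
  exact_mod_cast this

lemma lambdaSum_succ {l : ℕ} (b : Fin (l + 1) → ℕ) :
    lambdaSum b = 2 ^ b 0 * 3 ^ l + lambdaSum (Fin.tail b) := by
  simp only [lambdaSum, Fin.sum_univ_succ, Fin.rev_zero, Fin.val_last, Fin.rev_succ,
    Fin.val_castSucc, Fin.tail]

lemma lambdaSum_eq_two_mul {l : ℕ} {b : Fin l → ℕ} (hb : ∀ i, 1 ≤ b i) :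
    lambdaSum b = 2 * lambdaSum (fun i ↦ b i - 1) := by
  rw [lambdaSum, lambdaSum, Finset.mul_sum]
  refine Finset.sum_congr rfl fun i _ ↦ ?_
  rw [← mul_assoc, ← pow_succ', Nat.sub_add_cancel (hb i)]

lemma exists_half_of_three_pow_mul_add_two_mul {l x y m : ℕ}
    (h : 3 ^ l * x + 2 * y = 2 ^ (m + 1)) : ∃ k, x = 2 * k ∧ 3 ^ l * k + y = 2 ^ m := by
  have h2 : 2 ∣ 3 ^ l * x :=
    (Nat.dvd_add_left (dvd_mul_right 2 y)).mp (h ▸ dvd_pow_self 2 m.succ_ne_zero)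
  obtain ⟨k, rfl⟩ := (Nat.Coprime.pow_right l (by norm_num)).dvd_of_dvd_mul_left h2
  refine ⟨k, rfl, Nat.eq_of_mul_eq_mul_left two_pos ?_⟩
  rw [← pow_succ', ← h]
  ring

lemma val_le_apply_of_strictMono {l : ℕ} {b : Fin l → ℕ} (hb : StrictMono b) (i : Fin l) :
    (i : ℕ) ≤ b i := by
  obtain ⟨i, hi⟩ := i
  induction i with
  | zero => exact Nat.zero_le _
  | succ k ih =>
    have hlt := hb (show (⟨k, by omega⟩ : Fin l) < ⟨k + 1, hi⟩ from Nat.lt_succ_self k)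
    have hk : k ≤ b ⟨k, _⟩ := ih (by omega)
    exact Nat.succ_le_of_lt (hk.trans_lt hlt)

lemma strictMono_sub_one {l : ℕ} {b : Fin l → ℕ} (hb : StrictMono b) (hpos : ∀ i, 1 ≤ b i) :
    StrictMono fun i ↦ b i - 1 := fun i _ hij ↦ Nat.sub_lt_sub_right (hpos i) (hb hij)

lemma inLambdaNat_T_of_pos {m n l : ℕ} {b : Fin l → ℕ} (hl : l ≤ m + 1 - 3) (hb : StrictMono b)
    (hbm : ∀ i, b i ≤ m + 1 - 4) (hpos : ∀ i, 1 ≤ b i)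
    (heq : 3 ^ l * n + lambdaSum b = 2 ^ (m + 1)) : InLambdaNat m (T n) := by
  rw [lambdaSum_eq_two_mul hpos] at heq
  obtain ⟨k, rfl, hk⟩ := exists_half_of_three_pow_mul_add_two_mul heq
  have hT : T (2 * k) = k := by simp [T]
  have hb' := strictMono_sub_one hb hpos
  have hl' : l ≤ m - 3 := by
    rcases Nat.eq_zero_or_pos l with rfl | hl0
    · exact Nat.zero_le _
    · have : l - 1 ≤ b ⟨l - 1, _⟩ - 1 := val_le_apply_of_strictMono hb' ⟨l - 1, by omega⟩
      have := hbm ⟨l - 1, by omega⟩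
      have := hpos ⟨l - 1, by omega⟩
      omega
  rw [hT]
  exact ⟨l, _, hl', hb', fun i ↦ show b i - 1 ≤ m - 4 by have := hbm i; omega, hk⟩

lemma inLambdaNat_T_of_head_eq_zero {m n l : ℕ} {b : Fin (l + 1) → ℕ} (hl : l + 1 ≤ m + 1 - 3)
    (hb : StrictMono b) (hbm : ∀ i, b i ≤ m + 1 - 4) (h0 : b 0 = 0)
    (heq : 3 ^ (l + 1) * n + lambdaSum b = 2 ^ (m + 1)) : InLambdaNat m (T n) := by
  have htail (i : Fin l) : 1 ≤ Fin.tail b i := h0.symm.trans_lt (hb (Fin.succ_pos i))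
  rw [lambdaSum_succ, h0, lambdaSum_eq_two_mul htail] at heq
  have heq' : 3 ^ l * (3 * n + 1) + 2 * lambdaSum (fun i ↦ Fin.tail b i - 1) = 2 ^ (m + 1) := by
    rw [← heq]
    ring
  obtain ⟨k, hk, hk'⟩ := exists_half_of_three_pow_mul_add_two_mul heq'
  have hT : T n = k := by
    have : n % 2 = 1 := by omega
    simp only [T, this, if_true, hk, Nat.mul_div_cancel_left k two_pos]
  rw [hT]
  exact ⟨l, _, by omega, strictMono_sub_one (hb.comp Fin.strictMono_succ) htail,
    fun i ↦ show b i.succ - 1 ≤ m - 4 by have := hbm i.succ; omega, hk'⟩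

lemma inLambdaNat_T {m n : ℕ} (h : InLambdaNat (m + 1) n) : InLambdaNat m (T n) := by
  obtain ⟨l, b, hl, hb, hbm, heq⟩ := h
  by_cases hpos : ∀ i, 1 ≤ b i
  · exact inLambdaNat_T_of_pos hl hb hbm hpos heq
  · obtain ⟨i, hi⟩ := not_forall.mp hpos
    cases l with
    | zero => exact i.elim0
    | succ l =>
      have h0 : b 0 = 0 := by have := hb.monotone (Fin.zero_le i); omega
      exact inLambdaNat_T_of_head_eq_zero hl hb hbm h0 heq

lemma inLambdaNat_iterate_T {m n : ℕ} (h : InLambdaNat m n) {k : ℕ} (hk : k ≤ m) :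
    InLambdaNat (m - k) (T^[k] n) := by
  induction k with
  | zero => exact h
  | succ k ih =>
    rw [Function.iterate_succ_apply', show m - k = m - (k + 1) + 1 by omega] at *
    exact inLambdaNat_T (ih (by omega))

lemma eq_two_pow_of_inLambdaNat {m n : ℕ} (hm : m ≤ 3) (h : InLambdaNat m n) : n = 2 ^ m := by
  obtain ⟨l, b, hl, -, -, heq⟩ := h
  obtain rfl : l = 0 := by omega
  simpa [lambdaSum] using heq

lemma iterate_T_one_eq_one_or_two (j : ℕ) : T^[j] 1 = 1 ∨ T^[j] 1 = 2 := by
  induction j with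
  | zero => exact Or.inl rfl
  | succ j ih =>
    rw [Function.iterate_succ_apply']
    rcases ih with h | h <;> rw [h] <;> decide

lemma not_inLambdaNat_one {m : ℕ} (hm : m ≠ 0) : ¬ InLambdaNat m 1 := by
  intro h
  rcases Nat.lt_or_ge m 2 with hm2 | hm2
  · obtain rfl : m = 1 := by omega
    exact absurd (eq_two_pow_of_inLambdaNat (by omega) h) (by norm_num)
  · have h2 := inLambdaNat_iterate_T h (k := m - 2) (by omega)
    rw [show m - (m - 2) = 2 by omega] at h2
    have := eq_two_pow_of_inLambdaNat (by omega) h2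
    rcases iterate_T_one_eq_one_or_two (m - 2) with h1 | h1 <;> omega

theorem stmt_13 (m n : ℕ) (h : InLambda m n) :
    T^[m] n = 1 ∧ sigmaInf n = m := by
  have hn := inLambdaNat_of_inLambda h
  have hm : T^[m] n = 1 := by
    simpa using eq_two_pow_of_inLambdaNat (by omega) (inLambdaNat_iterate_T hn le_rfl)
  refine ⟨hm, le_antisymm (Nat.sInf_le hm) (le_csInf ⟨m, hm⟩ fun k hk ↦ ?_)⟩
  by_contra! hkm
  have h1 := inLambdaNat_iterate_T hn hkm.le
  rw [show T^[k] n = 1 from hk] at h1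
  exact not_inLambdaNat_one (by omega) h1
end

section
/- The Collatz conjecture holds if and only if every natural number n can be represented as n = 2^m/3^l − Σ_{k=1}^l 2^{b_k}/3^k for some m, l, b₁, …, b_l ∈ ℕ with 0 ≤ l ≤ m−3 and 0 ≤ b₁ < b₂ < ⋯ < b_l ≤ m−4 (interpreting the case m ≤ 3 as n = 2^m with l = 0). -/
/-!
Multiplying by `3^l`, the equation defining `Λ_m` becomes `3^l n + Σ_i 2^{b_i} 3^{l-1-i} = 2^m`.
Modulo 2 it shows that `n` is odd exactly when `b₁ = 0`. Halving then yields a representation of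
`T n` in `Λ_{m-1}`: in the odd case `3^l n + 3^{l-1} = 3^{l-1} · 2 T(n)`, so `b₁` is dropped, and
the remaining exponents all drop by one. For `n ≠ 1` the step reverses: the bound `l ≤ m - 3`
survives because `b` is injective with values below `m - 3`, and in the odd case `m ≥ 3` because
`T n ≥ 5`. So every element of `Λ_m` reaches `1` after `m` steps, and a number reaching `1` for the
first time after `m` steps lies in `Λ_m`.
-/

lemma two_mul_T_of_even {n : ℕ} (h : n % 2 = 0) : 2 * T n = n := by
  unfold T; rw [if_neg (by omega)]; omega

lemma two_mul_T_of_odd {n : ℕ} (h : n % 2 = 1) : 2 * T n = 3 * n + 1 := by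
  unfold T; rw [if_pos h]; omega

lemma mod_two_eq_zero_of_three_pow_mul_add_two_mul {l c w M : ℕ}
    (h : 3 ^ l * c + 2 * w = 2 * M) : c % 2 = 0 := by
  have : 3 ^ l * c % 2 = c % 2 := by rw [Nat.mul_mod, Nat.pow_mod]; simp
  omega

lemma three_pow_mul_add_two_mul_iff {l c t w M : ℕ} (h : 2 * t = c) :
    3 ^ l * c + 2 * w = 2 * M ↔ 3 ^ l * t + w = M := by
  rw [← h, mul_left_comm, ← mul_add, Nat.mul_left_cancel_iff two_pos]

section Exponents

variable {l : ℕ}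

def collatzSum (b : Fin l → ℕ) : ℕ := ∑ i : Fin l, 2 ^ b i * 3 ^ (l - 1 - i)

lemma collatzSum_shift (b : Fin l → ℕ) :
    collatzSum (fun i ↦ b i + 1) = 2 * collatzSum b := by
  simp only [collatzSum, Finset.mul_sum, pow_succ]
  exact Finset.sum_congr rfl fun i _ ↦ by ring

lemma collatzSum_cons (c : ℕ) (b : Fin l → ℕ) :
    collatzSum (Fin.cons c b : Fin (l + 1) → ℕ) = 2 ^ c * 3 ^ l + collatzSum b := by
  simp [collatzSum, Fin.sum_univ_succ, Nat.sub_sub, add_comm]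

def LambdaAdmissible (m : ℕ) (b : Fin l → ℕ) : Prop :=
  l ≤ m - 3 ∧ StrictMono b ∧ ∀ i, b i ≤ m - 4

lemma lambdaAdmissible_shift_iff {m : ℕ} {b : Fin l → ℕ} :
    LambdaAdmissible (m + 1) (fun i ↦ b i + 1) ↔ LambdaAdmissible m b := by
  have hmono : StrictMono (fun i ↦ b i + 1) ↔ StrictMono b := by simp [StrictMono]
  constructor
  · rintro ⟨-, hb, hle⟩
    have hlt (i : Fin l) : b i < m - 3 := by have := hle i; dsimp only at this; omega
    exact ⟨Fin.le_of_injective (fun i ↦ ⟨b i, hlt i⟩)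
      fun i j hij ↦ (hmono.1 hb).injective (congrArg Fin.val hij), hmono.1 hb,
      fun i ↦ by have := hlt i; omega⟩
  · rintro ⟨hl, hb, hle⟩
    exact ⟨by omega, hmono.2 hb, fun i ↦ by have := hle i; have := i.isLt; dsimp only; omega⟩

lemma LambdaAdmissible.cons_zero_shift {m : ℕ} {b : Fin l → ℕ} (hb : LambdaAdmissible m b)
    (hm : 3 ≤ m) : LambdaAdmissible (m + 1) (Fin.cons 0 (fun i ↦ b i + 1) : Fin (l + 1) → ℕ) := by
  obtain ⟨hl, hb, hle⟩ := hb
  refine ⟨by omega,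
    Fin.strictMono_cons.2 ⟨fun _ ↦ Nat.succ_pos _, fun i j hij ↦ by simpa using hb hij⟩,
    Fin.cases (Nat.zero_le _) fun i ↦ ?_⟩
  have := hle i
  have := i.isLt
  simp only [Fin.cons_succ]
  omega

lemma LambdaAdmissible.of_cons_zero_shift {m : ℕ} {b : Fin l → ℕ}
    (hb : LambdaAdmissible (m + 1) (Fin.cons 0 (fun i ↦ b i + 1) : Fin (l + 1) → ℕ)) :
    LambdaAdmissible m b := by
  obtain ⟨hl, hb, hle⟩ := hb
  refine ⟨by omega, fun i j hij ↦ by simpa using (Fin.strictMono_cons.1 hb).2 hij, fun i ↦ ?_⟩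
  have := hle i.succ
  simp only [Fin.cons_succ] at this
  omega

end Exponents

lemma cast_eq_lambda_iff {m n l : ℕ} (b : Fin l → ℕ) :
    ((n : ℚ) = 2 ^ m / 3 ^ l - ∑ i : Fin l, (2 ^ (b i) : ℚ) / 3 ^ (i.val + 1)) ↔
      3 ^ l * n + collatzSum b = 2 ^ m := by
  have hsum : (3 : ℚ) ^ l * ∑ i : Fin l, (2 ^ (b i) : ℚ) / 3 ^ (i.val + 1) = collatzSum b := by
    push_cast [collatzSum, Finset.mul_sum]
    refine Finset.sum_congr rfl fun i _ ↦ ?_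
    rw [← pow_sub_mul_pow 3 (show i.val + 1 ≤ l from i.isLt), Nat.sub_sub, add_comm 1]
    field_simp
  rw [← Nat.cast_inj (R := ℚ), eq_sub_iff_add_eq, eq_div_iff (by positivity)]
  push_cast
  rw [← hsum]
  constructor <;> intro h <;> linear_combination h

lemma inLambda_iff_s15 {m n : ℕ} : InLambda m n ↔
    ∃ (l : ℕ) (b : Fin l → ℕ), LambdaAdmissible m b ∧ 3 ^ l * n + collatzSum b = 2 ^ m := by
  simp only [InLambda, LambdaAdmissible, and_assoc, cast_eq_lambda_iff]

lemma inLambda_zero_iff {n : ℕ} : InLambda 0 n ↔ n = 1 := by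
  refine inLambda_iff_s15.trans ⟨fun ⟨l, b, ⟨hl, _⟩, h⟩ ↦ ?_, fun h ↦ ?_⟩
  · obtain rfl : l = 0 := by omega
    simpa [collatzSum] using h
  · exact ⟨0, Fin.elim0, ⟨le_rfl, fun i ↦ i.elim0, fun i ↦ i.elim0⟩, by simp [h, collatzSum]⟩

lemma InLambda.three_le {m x : ℕ} (h : InLambda m x) (hx : 5 ≤ x) : 3 ≤ m := by
  obtain ⟨l, b, ⟨hl, -⟩, h⟩ := inLambda_iff_s15.1 h
  by_contra! hm
  obtain rfl : l = 0 := by omega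
  simp only [collatzSum, Finset.univ_eq_empty, Finset.sum_empty, pow_zero, one_mul,
    add_zero] at h
  interval_cases m <;> omega

lemma inLambda_T_of_inLambda_succ {m n : ℕ} (h : InLambda (m + 1) n) : InLambda m (T n) := by
  obtain ⟨l, b, hb, h⟩ := inLambda_iff_s15.1 h
  rw [pow_succ'] at h
  refine inLambda_iff_s15.2 ?_
  by_cases hpos : ∀ i, 1 ≤ b i
  · obtain ⟨b, rfl⟩ : ∃ b' : Fin l → ℕ, b = fun i ↦ b' i + 1 :=
      ⟨fun i ↦ b i - 1, funext fun i ↦ by have := hpos i; dsimp only; omega⟩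
    rw [collatzSum_shift] at h
    have hn := mod_two_eq_zero_of_three_pow_mul_add_two_mul h
    exact ⟨l, b, lambdaAdmissible_shift_iff.1 hb,
      (three_pow_mul_add_two_mul_iff (two_mul_T_of_even hn)).1 h⟩
  · push Not at hpos
    obtain ⟨i, hi⟩ := hpos
    obtain _ | l := l
    · exact i.elim0
    have h0 : b 0 = 0 := by have := hb.2.1.monotone (Fin.zero_le i); omega
    obtain ⟨b, rfl⟩ : ∃ b' : Fin l → ℕ, b = Fin.cons 0 (fun i ↦ b' i + 1) := by
      refine ⟨fun j ↦ b j.succ - 1, funext fun j ↦ Fin.cases h0 (fun j ↦ ?_) j⟩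
      have := hb.2.1 (Fin.succ_pos j)
      simp only [Fin.cons_succ]
      omega
    rw [collatzSum_cons, collatzSum_shift] at h
    have h' : 3 ^ l * (3 * n + 1) + 2 * collatzSum b = 2 * 2 ^ m := by rw [← h]; ring
    have hn : n % 2 = 1 := by have := mod_two_eq_zero_of_three_pow_mul_add_two_mul h'; omega
    exact ⟨l, b, hb.of_cons_zero_shift,
      (three_pow_mul_add_two_mul_iff (two_mul_T_of_odd hn)).1 h'⟩

lemma inLambda_succ_of_inLambda_T {m n : ℕ} (hn : n ≠ 1) (h : InLambda m (T n)) :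
    InLambda (m + 1) n := by
  rcases Nat.mod_two_eq_zero_or_one n with hpar | hpar
  · obtain ⟨l, b, hb, h⟩ := inLambda_iff_s15.1 h
    refine inLambda_iff_s15.2 ⟨l, fun i ↦ b i + 1, lambdaAdmissible_shift_iff.2 hb, ?_⟩
    rwa [collatzSum_shift, pow_succ', three_pow_mul_add_two_mul_iff (two_mul_T_of_even hpar)]
  · have hm : 3 ≤ m := h.three_le (by have := two_mul_T_of_odd hpar; omega)
    obtain ⟨l, b, hb, h⟩ := inLambda_iff_s15.1 h
    refine inLambda_iff_s15.2 ⟨l + 1, _, hb.cons_zero_shift hm, ?_⟩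
    rw [← three_pow_mul_add_two_mul_iff (two_mul_T_of_odd hpar)] at h
    rw [collatzSum_cons, collatzSum_shift, pow_succ' 2 m, ← h]
    ring

lemma iterate_T_eq_one_of_inLambda {m n : ℕ} (h : InLambda m n) : T^[m] n = 1 := by
  induction m generalizing n with
  | zero => exact inLambda_zero_iff.1 h
  | succ m ih => exact ih (inLambda_T_of_inLambda_succ h)

lemma inLambda_of_iterate_T_eq_one {k n : ℕ} (hk : T^[k] n = 1)
    (hmin : ∀ j < k, T^[j] n ≠ 1) : InLambda k n := by
  induction k generalizing n with
  | zero => exact inLambda_zero_iff.2 hk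
  | succ k ih =>
    exact inLambda_succ_of_inLambda_T (hmin 0 k.succ_pos)
      (ih hk fun j hj ↦ hmin (j + 1) (by omega))

theorem stmt_15 :
    (∀ n : ℕ, 1 ≤ n → ∃ k : ℕ, T^[k] n = 1) ↔
    (∀ n : ℕ, 1 ≤ n → ∃ m : ℕ, InLambda m n) := by
  refine ⟨fun h n hn ↦ ?_, fun h n hn ↦ ?_⟩
  · have hex := h n hn
    exact ⟨Nat.find hex, inLambda_of_iterate_T_eq_one (Nat.find_spec hex)
      fun j hj ↦ Nat.find_min hex hj⟩
  · obtain ⟨m, hm⟩ := h n hn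
    exact ⟨m, iterate_T_eq_one_of_inLambda hm⟩
end

section
/- For m even with m ≥ 4 and 0 ≤ k ≤ (m−4)/2, the number (2^m − 2^{2k})/3 is a natural number with total stopping time exactly m; for m odd with m ≥ 5 and 0 ≤ k ≤ (m−5)/2, the number (2^m − 2^{2k+1})/3 is a natural number with total stopping time exactly m. -/
/-!
Write `(2^m - 2^b)/3 = 2^b * c` with `3 c + 1 = 2^(m-b)`; this needs `m - b` even, since
`4^t ≡ 1 (mod 3)`. The orbit halves `b` times down to the odd number `c`, jumps to `2^(m-b-1)`,
and halves down to `1`, taking `b + 1 + (m - b - 1) = m` steps. Of the values visited before the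
last one only `c` is odd, and `c ≠ 1` because `m - b ≠ 2`.
-/

/-- `σ∞(n) = m`. -/
def IsTotalStoppingTime (n m : ℕ) : Prop :=
  T^[m] n = 1 ∧ ∀ j < m, T^[j] n ≠ 1

lemma T_two_mul (n : ℕ) : T (2 * n) = n := by
  simp [T]

lemma T_of_three_mul_add_one_eq_two_pow {c d : ℕ} (hc : 3 * c + 1 = 2 ^ (d + 1)) :
    T c = 2 ^ d := by
  have hodd : c % 2 = 1 := by rw [pow_succ] at hc; omega
  rw [T, if_pos hodd, hc, pow_succ, Nat.mul_div_cancel _ two_pos]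

namespace IsTotalStoppingTime

lemma one : IsTotalStoppingTime 1 0 :=
  ⟨rfl, fun _ hj => absurd hj (Nat.not_lt_zero _)⟩

lemma of_T {n m : ℕ} (h : IsTotalStoppingTime (T n) m) (hn : n ≠ 1) :
    IsTotalStoppingTime n (m + 1) := by
  refine ⟨by rw [Function.iterate_succ_apply]; exact h.1, ?_⟩
  rintro (_ | j) hj
  · exact hn
  · rw [Function.iterate_succ_apply]; exact h.2 j (by omega)

lemma two_mul {n m : ℕ} (h : IsTotalStoppingTime n m) : IsTotalStoppingTime (2 * n) (m + 1) :=
  of_T (by rwa [T_two_mul]) (by omega)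

lemma two_pow_mul {n m : ℕ} (h : IsTotalStoppingTime n m) (b : ℕ) :
    IsTotalStoppingTime (2 ^ b * n) (m + b) := by
  induction b with
  | zero => simpa using h
  | succ b ih => rw [pow_succ', mul_assoc, ← add_assoc]; exact ih.two_mul

lemma two_pow (d : ℕ) : IsTotalStoppingTime (2 ^ d) d := by
  simpa using one.two_pow_mul d

lemma of_three_mul_add_one_eq_two_pow {c d : ℕ} (hc : 3 * c + 1 = 2 ^ (d + 1)) (hc1 : c ≠ 1) :
    IsTotalStoppingTime c (d + 1) :=
  of_T (by rw [T_of_three_mul_add_one_eq_two_pow hc]; exact two_pow d) hc1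

end IsTotalStoppingTime

lemma three_dvd_two_pow_sub_one {d : ℕ} (hd : Even d) : 3 ∣ 2 ^ d - 1 := by
  obtain ⟨t, rfl⟩ := hd
  rw [← two_mul, pow_mul]
  simpa using Nat.sub_dvd_pow_sub_pow 4 1 t

lemma isTotalStoppingTime_two_pow_sub_two_pow_div_three {m b : ℕ} (hb : b + 4 ≤ m)
    (hmb : Even (m - b)) :
    3 ∣ 2 ^ m - 2 ^ b ∧ IsTotalStoppingTime ((2 ^ m - 2 ^ b) / 3) m := by
  obtain ⟨d, rfl⟩ := Nat.exists_eq_add_of_le (show b + 1 ≤ m by omega)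
  have hsplit : 2 ^ (b + 1 + d) - 2 ^ b = 2 ^ b * (2 ^ (d + 1) - 1) := by
    rw [Nat.mul_sub, mul_one, ← pow_add, add_assoc, add_comm 1 d]
  have h3 : 3 ∣ 2 ^ (d + 1) - 1 := three_dvd_two_pow_sub_one (by rwa [show b + 1 + d - b = d + 1 by omega] at hmb)
  set c := (2 ^ (d + 1) - 1) / 3
  have hc : 3 * c + 1 = 2 ^ (d + 1) := by
    have : 1 ≤ 2 ^ (d + 1) := Nat.one_le_two_pow
    omega
  have hc1 : c ≠ 1 := by
    intro h1
    have : 2 ^ 3 ≤ 2 ^ (d + 1) := Nat.pow_le_pow_right two_pos (by omega)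
    omega
  refine ⟨hsplit ▸ Dvd.dvd.mul_left h3 _, ?_⟩
  rw [hsplit, Nat.mul_div_assoc _ h3, show b + 1 + d = d + 1 + b by ring]
  exact (IsTotalStoppingTime.of_three_mul_add_one_eq_two_pow hc hc1).two_pow_mul b

theorem stmt_16 (m k : ℕ) :
    (m % 2 = 0 → 4 ≤ m → k ≤ (m - 4) / 2 →
      3 ∣ 2 ^ m - 2 ^ (2 * k) ∧
      T^[m] ((2 ^ m - 2 ^ (2 * k)) / 3) = 1 ∧
      ∀ j : ℕ, j < m → T^[j] ((2 ^ m - 2 ^ (2 * k)) / 3) ≠ 1) ∧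
    (m % 2 = 1 → 5 ≤ m → k ≤ (m - 5) / 2 →
      3 ∣ 2 ^ m - 2 ^ (2 * k + 1) ∧
      T^[m] ((2 ^ m - 2 ^ (2 * k + 1)) / 3) = 1 ∧
      ∀ j : ℕ, j < m → T^[j] ((2 ^ m - 2 ^ (2 * k + 1)) / 3) ≠ 1) := by
  constructor
  · intro _ _ _
    exact isTotalStoppingTime_two_pow_sub_two_pow_div_three (by omega) (Nat.even_iff.mpr (by omega))
  · intro _ _ _
    exact isTotalStoppingTime_two_pow_sub_two_pow_div_three (by omega) (Nat.even_iff.mpr (by omega))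
end

section
/- For every m ∈ ℕ with m ≥ 2, the number (2^{2m} − 1)/3 is a natural number whose trajectory under T reaches 1 in exactly 2m steps; i.e., (4^m − 1)/3 ∈ S_{2m}. -/
lemma T_two_pow_succ (k : ℕ) : T (2 ^ (k + 1)) = 2 ^ k := by
  simp [T, pow_succ]

lemma T_iterate_two_pow {j k : ℕ} (h : j ≤ k) : T^[j] (2 ^ k) = 2 ^ (k - j) := by
  induction j generalizing k with
  | zero => rfl
  | succ j ih =>
    obtain ⟨l, rfl⟩ : ∃ l, k = l + 1 := ⟨k - 1, by omega⟩
    rw [Function.iterate_succ_apply, T_two_pow_succ, ih (by omega), Nat.add_sub_add_right]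

lemma T_of_three_mul_add_one_eq_two_pow_s19 {n k : ℕ} (h : 3 * n + 1 = 2 ^ (k + 1)) :
    T n = 2 ^ k := by
  have hodd : n % 2 = 1 := by
    have : 2 ^ (k + 1) % 2 = 0 := by simp [pow_succ]
    omega
  rw [T, if_pos hodd, h, pow_succ, Nat.mul_div_cancel _ two_pos]

lemma T_iterate_succ_of_three_mul_add_one_eq_two_pow {n k j : ℕ}
    (h : 3 * n + 1 = 2 ^ (k + 1)) (hj : j ≤ k) : T^[j + 1] n = 2 ^ (k - j) := by
  rw [Function.iterate_succ_apply, T_of_three_mul_add_one_eq_two_pow_s19 h, T_iterate_two_pow hj]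

lemma three_dvd_two_pow_two_mul_sub_one (m : ℕ) : 3 ∣ 2 ^ (2 * m) - 1 := by
  simpa [pow_mul] using Nat.sub_dvd_pow_sub_pow 4 1 m

theorem stmt_19 (m : ℕ) (hm : 2 ≤ m) :
    3 ∣ 2 ^ (2 * m) - 1 ∧
    T^[2 * m] ((2 ^ (2 * m) - 1) / 3) = 1 ∧
    ∀ j : ℕ, j < 2 * m → T^[j] ((2 ^ (2 * m) - 1) / 3) ≠ 1 := by
  have hdvd := three_dvd_two_pow_two_mul_sub_one m
  set n := (2 ^ (2 * m) - 1) / 3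
  obtain ⟨k, hk⟩ : ∃ k, 2 * m = k + 1 := ⟨2 * m - 1, by omega⟩
  have h16 : 2 ^ 4 ≤ 2 ^ (2 * m) := Nat.pow_le_pow_right two_pos (by omega)
  have hn : 3 * n + 1 = 2 ^ (k + 1) := by
    rw [← hk, Nat.mul_div_cancel' hdvd]
    omega
  refine ⟨hdvd, ?_, fun j hj => ?_⟩
  · rw [hk, T_iterate_succ_of_three_mul_add_one_eq_two_pow hn le_rfl, Nat.sub_self, pow_zero]
  · rcases j with _ | i
    · rw [← hk] at hn
      simp only [Function.iterate_zero, id]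
      omega
    · rw [T_iterate_succ_of_three_mul_add_one_eq_two_pow hn (by omega)]
      exact (Nat.one_lt_two_pow (by omega)).ne'
end
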